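/- arXiv:2602.11899 — 2 statements merged into one kernel-verified Lean document; each statement's English description precedes it below -/
import Mathlib

section
/- Let g : ℝ → ℝ be the saturation function g(x) = L for x ≤ L, g(x) = x for L < x < U, g(x) = U for x ≥ U, with L < U real. Let e be a standard normal random variable and define G(s) = E[g(s + e)]. Then G(s) = U + (L - s)·Φ(L - s) - (U - s)·Φ(U - s) + φ(L - s) - φ(U - s), where Φ and φ denote the standard normal cumulative distribution function and density. -/
open MeasureTheory ProbabilityTheory Real Filter Set Topology

/-- Standard normal cumulative distribution function. -/
noncomputable def stdPhi (x : ℝ) : ℝ := (gaussianReal 0 1 (Set.Iic x)).toReal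

/-- Standard normal probability density function. -/
noncomputable def stdpdf (x : ℝ) : ℝ :=
  (Real.sqrt (2 * Real.pi))⁻¹ * Real.exp (-x ^ 2 / 2)

/-! For `L < U` the saturation is `g x = U + (L - x)⁺ - (U - x)⁺`, so `G(s)` is `U` plus the
difference of two Gaussian "put prices" `E[(a - e)⁺]` at `a = L - s` and `a = U - s`. Each of
these equals `a Φ(a) + φ(a)`: on `e ≤ a` the integrand `(a - e) φ(e)` splits into `a φ(e)`,
integrating to `a Φ(a)`, and `-e φ(e) = φ'(e)`, integrating to `φ(a)`. -/

lemma stdpdf_eq_gaussianPDFReal : stdpdf = gaussianPDFReal 0 1 := by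
  ext x
  simp [stdpdf, gaussianPDFReal]

lemma integral_gaussianReal_eq_integral_stdpdf_mul (f : ℝ → ℝ) :
    ∫ x, f x ∂gaussianReal 0 1 = ∫ x, stdpdf x * f x := by
  rw [integral_gaussianReal_eq_integral_smul one_ne_zero, stdpdf_eq_gaussianPDFReal]
  rfl

lemma integrable_stdpdf : Integrable stdpdf := by
  rw [stdpdf_eq_gaussianPDFReal]
  exact integrable_gaussianPDFReal 0 1

lemma integrable_mul_stdpdf : Integrable fun x ↦ x * stdpdf x := by
  refine ((integrable_mul_exp_neg_mul_sq (b := 1 / 2) (by norm_num)).const_mul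
    (√(2 * π))⁻¹).congr (ae_of_all _ fun x ↦ ?_)
  simp only [stdpdf]
  ring_nf

lemma hasDerivAt_stdpdf (x : ℝ) : HasDerivAt stdpdf (-x * stdpdf x) x := by
  have h_exponent : HasDerivAt (fun y : ℝ ↦ -y ^ 2 / 2) (-x) x :=
    ((hasDerivAt_pow 2 x).neg.div_const 2).congr_deriv (by push_cast; ring)
  exact (h_exponent.exp.const_mul (√(2 * π))⁻¹).congr_deriv (by simp only [stdpdf]; ring)

lemma tendsto_stdpdf_cocompact : Tendsto stdpdf (cocompact ℝ) (𝓝 0) := by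
  have h := (tendsto_rpow_abs_mul_exp_neg_mul_sq_cocompact (a := 1 / 2) (by norm_num) 0).const_mul
    (√(2 * π))⁻¹
  rw [mul_zero] at h
  refine h.congr fun x ↦ ?_
  simp only [stdpdf, rpow_zero, one_mul]
  ring_nf

lemma setIntegral_Iic_stdpdf (a : ℝ) : ∫ x in Iic a, stdpdf x = stdPhi a := by
  rw [stdPhi, gaussianReal_apply_eq_integral 0 one_ne_zero, stdpdf_eq_gaussianPDFReal,
    ENNReal.toReal_ofReal (integral_nonneg (gaussianPDFReal_nonneg 0 1))]

lemma setIntegral_Iic_mul_stdpdf (a : ℝ) : ∫ x in Iic a, x * stdpdf x = -stdpdf a := by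
  have h := integral_Iic_of_hasDerivAt_of_tendsto' (f := fun x ↦ -stdpdf x) (a := a)
    (fun x _ ↦ (hasDerivAt_stdpdf x).neg.congr_deriv (by ring))
    integrable_mul_stdpdf.integrableOn
    (by simpa using (tendsto_stdpdf_cocompact.mono_left atBot_le_cocompact).neg)
  simpa using h

lemma integrable_max_sub_zero_gaussianReal (a : ℝ) :
    Integrable (fun e ↦ max (a - e) 0) (gaussianReal 0 1) :=
  ((integrable_const a).sub ((memLp_id_gaussianReal 1).integrable le_rfl)).pos_part

lemma integral_max_sub_zero_gaussianReal (a : ℝ) :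
    ∫ e, max (a - e) 0 ∂gaussianReal 0 1 = a * stdPhi a + stdpdf a := by
  have h_indicator : (fun e ↦ stdpdf e * max (a - e) 0)
      = (Iic a).indicator fun e ↦ a * stdpdf e - e * stdpdf e := by
    ext e
    by_cases he : e ≤ a
    · rw [indicator_of_mem (mem_Iic.mpr he), max_eq_left (by linarith)]
      ring
    · rw [indicator_of_notMem (notMem_Iic.mpr (not_le.mp he)), max_eq_right (by linarith),
        mul_zero]
  rw [integral_gaussianReal_eq_integral_stdpdf_mul, h_indicator,
    integral_indicator measurableSet_Iic,
    integral_sub (integrable_stdpdf.const_mul a).integrableOn integrable_mul_stdpdf.integrableOn,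
    integral_const_mul, setIntegral_Iic_stdpdf, setIntegral_Iic_mul_stdpdf, sub_neg_eq_add]

lemma saturation_eq_add_max_sub {L U : ℝ} (hLU : L < U) (x : ℝ) :
    (if x ≤ L then L else if x < U then x else U) = U + max (L - x) 0 - max (U - x) 0 := by
  split_ifs with hL hU
  · rw [max_eq_left (by linarith), max_eq_left (by linarith)]
    ring
  · rw [max_eq_right (by linarith), max_eq_left (by linarith)]
    ring
  · rw [max_eq_right (by linarith), max_eq_right (by linarith)]
    ring

theorem stmt2 (L U : ℝ) (hLU : L < U) (g : ℝ → ℝ)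
    (hg : ∀ x, g x = if x ≤ L then L else if x < U then x else U) (s : ℝ) :
    ∫ e, g (s + e) ∂(gaussianReal 0 1) =
      U + (L - s) * stdPhi (L - s) - (U - s) * stdPhi (U - s)
        + stdpdf (L - s) - stdpdf (U - s) := by
  have h_g : ∀ e, g (s + e) = U + max (L - s - e) 0 - max (U - s - e) 0 := fun e ↦ by
    rw [hg, saturation_eq_add_max_sub hLU, sub_sub, sub_sub]
  simp_rw [h_g]
  rw [integral_sub (f := fun e ↦ U + max (L - s - e) 0)
      ((integrable_const U).add (integrable_max_sub_zero_gaussianReal (L - s)))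
      (integrable_max_sub_zero_gaussianReal (U - s)),
    integral_add (integrable_const U) (integrable_max_sub_zero_gaussianReal (L - s)),
    integral_const, probReal_univ, one_smul,
    integral_max_sub_zero_gaussianReal, integral_max_sub_zero_gaussianReal]
  ring
end

section
/- Let f(x) = 1/(1 + e^{-x}) be the sigmoid function and for fixed φₖ ∈ ℝ^d, θ* ∈ ℝ^d with |⟨φₖ, θ⟩| ≤ M and |⟨φₖ, θ*⟩| ≤ M, define J(θ) = -f(⟨φₖ, θ*⟩)·log f(⟨φₖ, θ⟩) - (1 - f(⟨φₖ, θ*⟩))·log(1 - f(⟨φₖ, θ⟩)) minus its minimum value (the entropy term), i.e., the KL divergence between Bernoulli(f(⟨φₖ,θ*⟩)) and Bernoulli(f(⟨φₖ,θ⟩)). Then (∂L/∂x evaluated at x = f(⟨φₖ,θ⟩))² ≤ ((1 + e^M)⁴ / (2e^{2M}))·J(θ). -/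
/-!
Write `H(p, t) = -(p log t + (1 - p) log (1 - t))` for the cross entropy; the loss derivative
`(x - y) / (x (1 - x))` is `∂H(y, ·)/∂t` at `t = x`, and `J = H(y, x) - H(y, y)`.
Since `t (1 - t) ≤ 1/4`, the function `t ↦ H(y, t) - 2 (t - y)²` is increasing for `t ≥ y`,
which gives Pinsker's inequality `2 (x - y)² ≤ J` (the case `x ≤ y` follows by `p ↦ 1 - p`).
For the sigmoid, `σ(a) (1 - σ(a)) = 1 / (2 + 2 cosh a) ≥ 1 / (2 + 2 cosh M)` when `|a| ≤ M`,
and `(1 + e^M)⁴ / (2 e^{2M}) = (2 + 2 cosh M)² / 2`; combining the two bounds gives the claim.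
-/

open Real Set RealInnerProductSpace

noncomputable def crossEntropy (p t : ℝ) : ℝ := -(p * log t + (1 - p) * log (1 - t))

lemma crossEntropy_one_sub (p t : ℝ) : crossEntropy (1 - p) (1 - t) = crossEntropy p t := by
  simp only [crossEntropy, sub_sub_cancel]
  ring

lemma hasDerivAt_crossEntropy (p : ℝ) {t : ℝ} (ht₀ : 0 < t) (ht₁ : t < 1) :
    HasDerivAt (crossEntropy p) ((t - p) / (t * (1 - t))) t := by
  have hlog := (hasDerivAt_log ht₀.ne').const_mul p
  have hlog₁ := (((hasDerivAt_id' t).const_sub 1).log (sub_pos.2 ht₁).ne').const_mul (1 - p)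
  refine (hlog.add hlog₁).neg.congr_deriv ?_
  have : 1 - t ≠ 0 := (sub_pos.2 ht₁).ne'
  field_simp
  ring

lemma crossEntropy_sub_self {p q : ℝ} (hp₀ : 0 < p) (hp₁ : p < 1) (hq₀ : 0 < q) (hq₁ : q < 1) :
    crossEntropy p q - crossEntropy p p =
      p * log (p / q) + (1 - p) * log ((1 - p) / (1 - q)) := by
  rw [log_div hp₀.ne' hq₀.ne', log_div (sub_pos.2 hp₁).ne' (sub_pos.2 hq₁).ne']
  unfold crossEntropy
  ring

lemma two_mul_sq_le_crossEntropy_sub_self_of_le {p q : ℝ} (hp₀ : 0 < p) (hpq : p ≤ q)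
    (hq₁ : q < 1) : 2 * (q - p) ^ 2 ≤ crossEntropy p q - crossEntropy p p := by
  set G : ℝ → ℝ := fun t ↦ crossEntropy p t - 2 * (t - p) ^ 2
  have hIcc : Icc p q ⊆ Ioo 0 1 := fun t ht ↦ ⟨hp₀.trans_le ht.1, ht.2.trans_lt hq₁⟩
  have hG : ∀ t ∈ Icc p q, HasDerivAt G ((t - p) * (1 / (t * (1 - t)) - 4)) t := by
    intro t ht
    obtain ⟨ht₀, ht₁⟩ := hIcc ht
    refine ((hasDerivAt_crossEntropy p ht₀ ht₁).sub
      ((((hasDerivAt_id' t).sub_const p).pow 2).const_mul 2)).congr_deriv ?_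
    have : 1 - t ≠ 0 := (sub_pos.2 ht₁).ne'
    field_simp
    ring
  have hG' : ∀ t ∈ interior (Icc p q), 0 ≤ (t - p) * (1 / (t * (1 - t)) - 4) := by
    rw [interior_Icc]
    intro t ht
    obtain ⟨ht₀, ht₁⟩ := hIcc (Ioo_subset_Icc_self ht)
    have hvar : 4 ≤ 1 / (t * (1 - t)) := by
      rw [le_div_iff₀ (mul_pos ht₀ (sub_pos.2 ht₁))]
      nlinarith [sq_nonneg (2 * t - 1)]
    exact mul_nonneg (sub_nonneg.2 ht.1.le) (sub_nonneg.2 hvar)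
  have hmono : MonotoneOn G (Icc p q) :=
    monotoneOn_of_hasDerivWithinAt_nonneg (convex_Icc p q)
      (fun t ht ↦ (hG t ht).continuousAt.continuousWithinAt)
      (fun t ht ↦ (hG t (interior_subset ht)).hasDerivWithinAt) hG'
  have := hmono (left_mem_Icc.2 hpq) (right_mem_Icc.2 hpq) hpq
  simp only [G, sub_self] at this
  linarith

theorem binary_pinsker {p q : ℝ} (hp₀ : 0 < p) (hp₁ : p < 1) (hq₀ : 0 < q) (hq₁ : q < 1) :
    2 * (p - q) ^ 2 ≤ p * log (p / q) + (1 - p) * log ((1 - p) / (1 - q)) := by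
  rw [← crossEntropy_sub_self hp₀ hp₁ hq₀ hq₁]
  rcases le_total p q with hpq | hqp
  · rw [sub_sq_comm]
    exact two_mul_sq_le_crossEntropy_sub_self_of_le hp₀ hpq hq₁
  · have := two_mul_sq_le_crossEntropy_sub_self_of_le (sub_pos.2 hp₁) (sub_le_sub_left hqp 1)
      (sub_lt_self 1 hq₀)
    rwa [crossEntropy_one_sub, crossEntropy_one_sub, sub_sub_sub_cancel_left] at this

lemma sigmoid_mul_one_sub_sigmoid (a : ℝ) :
    sigmoid a * (1 - sigmoid a) = (2 + 2 * cosh a)⁻¹ := by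
  rw [← sigmoid_neg, sigmoid_def, sigmoid_def, neg_neg, ← mul_inv, cosh_eq]
  congr 1
  have : exp (-a) * exp a = 1 := by rw [← exp_add, neg_add_cancel, exp_zero]
  linear_combination this

lemma inv_two_add_two_mul_cosh_le_sigmoid_mul_one_sub_sigmoid {a M : ℝ} (h : |a| ≤ M) :
    (2 + 2 * cosh M)⁻¹ ≤ sigmoid a * (1 - sigmoid a) := by
  rw [sigmoid_mul_one_sub_sigmoid]
  gcongr
  exact cosh_le_cosh.2 (h.trans (le_abs_self M))

lemma one_add_exp_pow_four_div (M : ℝ) :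
    (1 + exp M) ^ 4 / (2 * exp (2 * M)) = (2 + 2 * cosh M) ^ 2 / 2 := by
  have hM : exp (2 * M) = exp M ^ 2 := by rw [← exp_nat_mul]; norm_num
  rw [hM, cosh_eq, exp_neg]
  have := exp_pos M
  field_simp
  ring

theorem stmt6_general {d : ℕ} (M : ℝ) (φk θstar θ : EuclideanSpace ℝ (Fin d))
    (f : ℝ → ℝ) (hf : ∀ x, f x = 1 / (1 + Real.exp (-x)))
    (hθ : |⟪φk, θ⟫| ≤ M)
    (y x J : ℝ) (hy : y = f ⟪φk, θstar⟫) (hx : x = f ⟪φk, θ⟫)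
    (hJ : J = y * Real.log (y / x) + (1 - y) * Real.log ((1 - y) / (1 - x))) :
    ((x - y) / (x * (1 - x))) ^ 2 ≤
      ((1 + Real.exp M) ^ 4 / (2 * Real.exp (2 * M))) * J := by
  obtain rfl : f = sigmoid := funext fun t ↦ by rw [hf, sigmoid_def, one_div]
  have hvar : (2 + 2 * cosh M)⁻¹ ≤ x * (1 - x) :=
    hx ▸ inv_two_add_two_mul_cosh_le_sigmoid_mul_one_sub_sigmoid hθ
  have hpinsker : 2 * (y - x) ^ 2 ≤ J := hJ ▸ binary_pinsker
    (hy ▸ sigmoid_pos _) (hy ▸ sigmoid_lt_one _) (hx ▸ sigmoid_pos _) (hx ▸ sigmoid_lt_one _)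
  have hc : 0 < 2 + 2 * cosh M := by positivity
  rw [one_add_exp_pow_four_div, div_pow]
  calc (x - y) ^ 2 / (x * (1 - x)) ^ 2
      ≤ (x - y) ^ 2 / (2 + 2 * cosh M)⁻¹ ^ 2 := by gcongr
    _ = (2 + 2 * cosh M) ^ 2 / 2 * (2 * (y - x) ^ 2) := by field_simp; ring
    _ ≤ (2 + 2 * cosh M) ^ 2 / 2 * J := by gcongr

theorem stmt6 {d : ℕ} (M : ℝ) (φk θstar θ : EuclideanSpace ℝ (Fin d))
    (f : ℝ → ℝ) (hf : ∀ x, f x = 1 / (1 + Real.exp (-x)))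
    (hθ : |⟪φk, θ⟫| ≤ M) (hθstar : |⟪φk, θstar⟫| ≤ M)
    (y x J : ℝ) (hy : y = f ⟪φk, θstar⟫) (hx : x = f ⟪φk, θ⟫)
    (hJ : J = y * Real.log (y / x) + (1 - y) * Real.log ((1 - y) / (1 - x))) :
    ((x - y) / (x * (1 - x))) ^ 2 ≤
      ((1 + Real.exp M) ^ 4 / (2 * Real.exp (2 * M))) * J :=
  stmt6_general M φk θstar θ f hf hθ y x J hy hx hJ
end
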